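/- In the two-candidate reduced instance: if there exists W ⊆ V \ {u_1} such that candidate 1 uniquely wins the election restricted to W, then there exists a set A ⊆ {1, …, m} with |A| = ℓ and ⋃_{i ∈ A} S_i = {1, …, 3ℓ}. -/

import Mathlib

/-- Vertices of the two-candidate reduced instance: the path vertices
`u_1, …, u_{ℓ(3m−1)}` (0-indexed as `u i` for `i : Fin (ℓ * (3 * m - 1))`, so `u_1` is
`u ⟨0, _⟩`), the vertex `r`, the vertices `v_1, …, v_m`, and the vertices `w_{j,k}` for
`j ∈ [m]`, `k ∈ [3ℓ]` (both 0-indexed). -/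
inductive V2 (ℓ m : ℕ) : Type
  | u (i : Fin (ℓ * (3 * m - 1))) : V2 ℓ m
  | r : V2 ℓ m
  | v (i : Fin m) : V2 ℓ m
  | w (j : Fin m) (k : Fin (3 * ℓ)) : V2 ℓ m
  deriving DecidableEq

/-- Base edge relation of the two-candidate reduced instance: `u_i ~ u_{i+1}`,
`u_{ℓ(3m−1)} ~ r`, `r ~ v_i` for all `i`, and `v_i ~ w_{j,k}` iff `k ∈ S i`. -/
def baseRel2 (ℓ m : ℕ) (S : Fin m → Finset (Fin (3 * ℓ))) :
    V2 ℓ m → V2 ℓ m → Prop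
  | .u i, .u i' => (i : ℕ) + 1 = (i' : ℕ)
  | .u i, .r => (i : ℕ) + 1 = ℓ * (3 * m - 1)
  | .r, .v _ => True
  | .v i, .w _ k => k ∈ S i
  | _, _ => False

/-- The graph of the two-candidate reduced instance. -/
def G2 (ℓ m : ℕ) (S : Fin m → Finset (Fin (3 * ℓ))) : SimpleGraph (V2 ℓ m) :=
  SimpleGraph.fromRel (baseRel2 ℓ m S)

/-- The voting function of the two-candidate reduced instance: `u`'s and `v`'s vote for
candidate `0`; `r` and the `w`'s vote for candidate `1`. -/
def τ2 (ℓ m : ℕ) : V2 ℓ m → Fin 2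
  | .u _ => 0
  | .r => 1
  | .v _ => 0
  | .w _ _ => 1

/-- The distinguished vertex `x = u_1`. -/
def x2 (ℓ m : ℕ) (h : 0 < ℓ * (3 * m - 1)) : V2 ℓ m := V2.u ⟨0, h⟩

/-- `HW G W x`: the set of vertices reachable from `x` in the subgraph of `G` induced on
the complement of `W` (each step of a connecting walk must avoid `W`). -/
def HW {V : Type*} (G : SimpleGraph V) (W : Set V) (x : V) : Set V :=
  {z | Relation.ReflTransGen (fun a b => G.Adj a b ∧ a ∉ W ∧ b ∉ W) x z}

/-- With two candidates, candidate `1` uniquely wins the election restricted to `W` iff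
`|H_W ∩ τ⁻¹(1)| > |H_W ∩ τ⁻¹(0)|`. -/
def wins2 (ℓ m : ℕ) (S : Fin m → Finset (Fin (3 * ℓ))) (x : V2 ℓ m)
    (W : Set (V2 ℓ m)) : Prop :=
  (HW (G2 ℓ m S) W x ∩ τ2 ℓ m ⁻¹' {0}).ncard <
    (HW (G2 ℓ m S) W x ∩ τ2 ℓ m ⁻¹' {1}).ncard

-- auxiliary development
def V2equiv (ℓ m : ℕ) :
    V2 ℓ m ≃ (Fin (ℓ * (3 * m - 1)) ⊕ Unit ⊕ Fin m ⊕ Fin m × Fin (3 * ℓ)) where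
  toFun z := match z with
    | .u i => .inl i
    | .r => .inr (.inl ())
    | .v i => .inr (.inr (.inl i))
    | .w j k => .inr (.inr (.inr (j, k)))
  invFun z := match z with
    | .inl i => .u i
    | .inr (.inl _) => .r
    | .inr (.inr (.inl i)) => .v i
    | .inr (.inr (.inr (j, k))) => .w j k
  left_inv := by rintro (i | _ | i | ⟨j, k⟩) <;> rfl
  right_inv := by rintro (i | ⟨⟩ | i | ⟨j, k⟩) <;> rfl

instance (ℓ m : ℕ) : Fintype (V2 ℓ m) := Fintype.ofEquiv _ (V2equiv ℓ m).symm

lemma G2_adj {ℓ m : ℕ} {S : Fin m → Finset (Fin (3 * ℓ))} (a b : V2 ℓ m) :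
    (G2 ℓ m S).Adj a b ↔ a ≠ b ∧ (baseRel2 ℓ m S a b ∨ baseRel2 ℓ m S b a) :=
  SimpleGraph.fromRel_adj _ _ _

theorem core (ℓ m : ℕ) (hℓ : 1 ≤ ℓ) (hm : 1 ≤ m)
    (S : Fin m → Finset (Fin (3 * ℓ)))
    (hS3 : ∀ i, (S i).card = 3)
    (W : Set (V2 ℓ m)) (h0 : 0 < ℓ * (3 * m - 1))
    (hxW : V2.u ⟨0, h0⟩ ∉ W)
    (hwins : (HW (G2 ℓ m S) W (V2.u ⟨0, h0⟩) ∩ τ2 ℓ m ⁻¹' {0}).ncard <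
      (HW (G2 ℓ m S) W (V2.u ⟨0, h0⟩) ∩ τ2 ℓ m ⁻¹' {1}).ncard) :
    ∃ A : Finset (Fin m), A.card = ℓ ∧ A.biUnion S = Finset.univ := by
  classical
  set L := ℓ * (3 * m - 1) with hLdef
  set H : Set (V2 ℓ m) := HW (G2 ℓ m S) W (V2.u ⟨0, h0⟩) with hHdef
  -- helper to derive a contradiction when no 1-voter is reachable
  have empty_contra : (∀ z ∈ H, τ2 ℓ m z = 0) → False := by
    intro hall
    have : H ∩ τ2 ℓ m ⁻¹' {1} = ∅ := by
      ext z
      simp only [Set.mem_inter_iff, Set.mem_preimage, Set.mem_singleton_iff,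
        Set.mem_empty_iff_false, iff_false]
      rintro ⟨hz, h1⟩
      rw [hall z hz] at h1
      exact absurd h1 (by decide)
    rw [this, Set.ncard_empty] at hwins
    omega
  -- Case: W contains a path vertex
  by_cases hWu : ∃ n : Fin L, V2.u n ∈ W
  · exfalso
    have hP : ∃ n : ℕ, ∃ h : n < L, V2.u ⟨n, h⟩ ∈ W := by
      obtain ⟨n, hn⟩ := hWu
      exact ⟨n.1, n.2, by simpa using hn⟩
    obtain ⟨i0, hi0L, hi0W, hmin⟩ :
        ∃ i0, ∃ h : i0 < L, V2.u ⟨i0, h⟩ ∈ W ∧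
          ∀ j < i0, ∀ h' : j < L, V2.u ⟨j, h'⟩ ∉ W := by
      obtain ⟨h1, h2⟩ := Nat.find_spec hP
      exact ⟨Nat.find hP, h1, h2, fun j hj h hmem => Nat.find_min hP hj ⟨h, hmem⟩⟩
    have hi0pos : 0 < i0 := by
      rcases Nat.eq_zero_or_pos i0 with h | h
      · exfalso; subst h; exact hxW hi0W
      · exact h
    apply empty_contra
    have claim : ∀ z ∈ H, ∃ j : ℕ, ∃ hj : j < L, j < i0 ∧ z = V2.u ⟨j, hj⟩ := by
      intro z hz
      have hz' : Relation.ReflTransGen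
          (fun a b => (G2 ℓ m S).Adj a b ∧ a ∉ W ∧ b ∉ W) (V2.u ⟨0, h0⟩) z := hz
      induction hz' with
      | refl => exact ⟨0, h0, hi0pos, rfl⟩
      | @tail c z' hc hstep ih =>
        obtain ⟨j, hj, hji0, rfl⟩ := ih (by exact hc)
        obtain ⟨hadj, _, hzW⟩ := hstep
        rw [G2_adj] at hadj
        rcases z' with i' | _ | i | ⟨j', k⟩
        · rcases hadj.2 with hb | hb
          · have hb' : j + 1 = (i' : ℕ) := hb
            have hne : (i' : ℕ) ≠ i0 := by
              intro hcontra
              apply hzW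
              have : i' = ⟨i0, hi0L⟩ := Fin.ext hcontra
              rw [this]; exact hi0W
            refine ⟨i', i'.isLt, by omega, by simp⟩
          · have hb' : (i' : ℕ) + 1 = j := hb
            refine ⟨i', i'.isLt, by omega, by simp⟩
        · exfalso
          rcases hadj.2 with hb | hb
          · have hb' : j + 1 = L := hb
            omega
          · exact (hb : False).elim
        · exact absurd hadj.2 (by rintro (hb | hb) <;> exact (hb : False).elim)
        · exact absurd hadj.2 (by rintro (hb | hb) <;> exact (hb : False).elim)
    intro z hz
    obtain ⟨j, hj, _, rfl⟩ := claim z hz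
    rfl
  push_neg at hWu
  -- Case: W contains r
  by_cases hWr : V2.r ∈ W
  · exfalso
    apply empty_contra
    have claim : ∀ z ∈ H, ∃ i : Fin L, z = V2.u i := by
      intro z hz
      have hz' : Relation.ReflTransGen
          (fun a b => (G2 ℓ m S).Adj a b ∧ a ∉ W ∧ b ∉ W) (V2.u ⟨0, h0⟩) z := hz
      induction hz' with
      | refl => exact ⟨⟨0, h0⟩, rfl⟩
      | @tail c z' hc hstep ih =>
        obtain ⟨i, rfl⟩ := ih (by exact hc)
        obtain ⟨hadj, _, hzW⟩ := hstep
        rw [G2_adj] at hadj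
        rcases z' with i' | _ | i2 | ⟨j', k⟩
        · exact ⟨i', rfl⟩
        · exact absurd hWr hzW
        · exact absurd hadj.2 (by rintro (hb | hb) <;> exact (hb : False).elim)
        · exact absurd hadj.2 (by rintro (hb | hb) <;> exact (hb : False).elim)
    intro z hz
    obtain ⟨i, rfl⟩ := claim z hz
    rfl
  -- Main case: no u in W, r not in W
  have hu : ∀ n (hn : n < L), V2.u ⟨n, hn⟩ ∈ H := by
    intro n
    induction n with
    | zero => intro hn; exact Relation.ReflTransGen.refl
    | succ n ih =>
      intro hn
      refine Relation.ReflTransGen.tail (ih (by omega)) ⟨?_, hWu _, hWu _⟩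
      rw [G2_adj]
      refine ⟨?_, Or.inl ?_⟩
      · intro hcontra
        have : n = n + 1 := by
          have := congrArg (fun z => match z with | V2.u i => (i : ℕ) | _ => 0) hcontra
          simpa using this
        omega
      · show n + 1 = n + 1
        rfl
  have hL2 : 2 ≤ 3 * m - 1 := by omega
  have hLpos : 0 < L := h0
  have hr : V2.r ∈ H := by
    refine Relation.ReflTransGen.tail (hu (L - 1) (by omega)) ⟨?_, hWu _, hWr⟩
    rw [G2_adj]
    refine ⟨(by intro h; cases h), Or.inl ?_⟩
    show (L - 1) + 1 = L
    omega
  set A : Finset (Fin m) := Finset.univ.filter (fun i => V2.v i ∈ H) with hAdef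
  set C : Finset (Fin (3 * ℓ)) := A.biUnion S with hCdef
  -- backward lemma for w's
  have hw_back : ∀ j k, V2.w j k ∈ H → ∃ i, i ∈ A ∧ k ∈ S i := by
    intro j k hzk
    have hzk' : Relation.ReflTransGen
        (fun a b => (G2 ℓ m S).Adj a b ∧ a ∉ W ∧ b ∉ W) (V2.u ⟨0, h0⟩) (V2.w j k) := hzk
    rcases hzk'.cases_tail with heq | ⟨c, hc, hstep⟩
    · exact absurd heq (by intro h; cases h)
    · obtain ⟨hadj, _, _⟩ := hstep
      rw [G2_adj] at hadj
      rcases c with i' | _ | i | ⟨j', k'⟩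
      · exact absurd hadj.2 (by rintro (hb | hb) <;> exact (hb : False).elim)
      · exact absurd hadj.2 (by rintro (hb | hb) <;> exact (hb : False).elim)
      · rcases hadj.2 with hb | hb
        · exact ⟨i, by simp [hAdef]; exact hc, hb⟩
        · exact (hb : False).elim
      · exact absurd hadj.2 (by rintro (hb | hb) <;> exact (hb : False).elim)
  -- counting zeros
  set Z : Set (V2 ℓ m) := H ∩ τ2 ℓ m ⁻¹' {0} with hZdef
  set Z0 : Finset (V2 ℓ m) :=
    (Finset.univ.image (V2.u : Fin L → V2 ℓ m)) ∪ A.image V2.v with hZ0def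
  have huinj : Function.Injective (V2.u : Fin L → V2 ℓ m) := by
    intro a b h; injection h
  have hvinj : Function.Injective (V2.v : Fin m → V2 ℓ m) := by
    intro a b h; injection h
  have hZ0card : Z0.card = L + A.card := by
    rw [hZ0def, Finset.card_union_of_disjoint, Finset.card_image_of_injective _ huinj,
      Finset.card_image_of_injective _ hvinj, Finset.card_univ, Fintype.card_fin]
    rw [Finset.disjoint_left]
    rintro a ha hb
    simp only [Finset.mem_image, Finset.mem_univ] at ha hb
    obtain ⟨i, _, rfl⟩ := ha
    obtain ⟨i', _, h⟩ := hb
    cases h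
  have hZ0sub : ↑Z0 ⊆ Z := by
    intro z hz
    simp only [hZ0def, Finset.coe_union, Set.mem_union, Finset.coe_image,
      Set.mem_image, Finset.mem_coe, Finset.mem_univ, Finset.coe_univ,
      Set.image_univ, Set.mem_range] at hz
    rcases hz with ⟨i, rfl⟩ | ⟨i, hi, rfl⟩
    · exact ⟨by simpa using hu i.1 i.2, rfl⟩
    · rw [hAdef] at hi
      simp only [Finset.mem_filter] at hi
      exact ⟨hi.2, rfl⟩
  have hzcount : L + A.card ≤ Z.ncard := by
    calc L + A.card = Z0.card := hZ0card.symm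
    _ = (↑Z0 : Set (V2 ℓ m)).ncard := (Set.ncard_coe_finset _).symm
    _ ≤ Z.ncard := Set.ncard_le_ncard hZ0sub (Set.toFinite _)
  -- counting ones
  set O : Set (V2 ℓ m) := H ∩ τ2 ℓ m ⁻¹' {1} with hOdef
  set O1 : Finset (V2 ℓ m) :=
    insert V2.r ((Finset.univ ×ˢ C).image fun p => V2.w p.1 p.2) with hO1def
  have hOsub : O ⊆ ↑O1 := by
    rintro z ⟨hzH, hz1⟩
    rcases z with i | _ | i | ⟨j, k⟩
    · exact absurd hz1 (by simp [τ2])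
    · simp [hO1def]
    · exact absurd hz1 (by simp [τ2])
    · obtain ⟨i, hiA, hk⟩ := hw_back j k hzH
      simp only [hO1def, Finset.coe_insert, Set.mem_insert_iff, Finset.coe_image,
        Set.mem_image, Finset.mem_coe, Finset.mem_product, Finset.mem_univ]
      right
      exact ⟨(j, k), ⟨trivial, Finset.mem_biUnion.mpr ⟨i, hiA, hk⟩⟩, rfl⟩
  have hocount : O.ncard ≤ 1 + m * C.card := by
    calc O.ncard ≤ (↑O1 : Set (V2 ℓ m)).ncard :=
          Set.ncard_le_ncard hOsub (Set.toFinite _)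
    _ = O1.card := Set.ncard_coe_finset _
    _ ≤ ((Finset.univ ×ˢ C).image fun p : Fin m × Fin (3 * ℓ) => V2.w p.1 p.2).card + 1 :=
          Finset.card_insert_le _ _
    _ ≤ (Finset.univ ×ˢ C).card + 1 := by
          exact Nat.add_le_add_right (Finset.card_image_le) 1
    _ = 1 + m * C.card := by
          rw [Finset.card_product, Finset.card_univ, Fintype.card_fin]
          omega
  -- combining
  have key : L + A.card ≤ m * C.card := by
    have := hwins
    omega
  have hcle : C.card ≤ 3 * ℓ := by
    calc C.card ≤ Finset.univ.card := Finset.card_le_univ _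
    _ = 3 * ℓ := by rw [Finset.card_univ, Fintype.card_fin]
  have hc3t : C.card ≤ 3 * A.card := by
    calc C.card ≤ ∑ i ∈ A, (S i).card := Finset.card_biUnion_le
    _ = 3 * A.card := by simp [hS3, mul_comm]
  have e1 : m * (3 * ℓ) = L + ℓ := by
    have h3 : 3 * m - 1 + 1 = 3 * m := by omega
    calc m * (3 * ℓ) = ℓ * (3 * m) := by ring
    _ = ℓ * ((3 * m - 1) + 1) := by rw [h3]
    _ = L + ℓ := by rw [hLdef]; ring
  have htℓ : A.card ≤ ℓ := by
    have h1 : m * C.card ≤ m * (3 * ℓ) := Nat.mul_le_mul_left _ hcle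
    omega
  have hℓt : ℓ ≤ A.card := by
    have h2 : m * C.card ≤ m * (3 * A.card) := Nat.mul_le_mul_left _ hc3t
    have e2 : m * (3 * A.card) = A.card * (3 * m - 1) + A.card := by
      have h3 : 3 * m - 1 + 1 = 3 * m := by omega
      calc m * (3 * A.card) = A.card * (3 * m) := by ring
      _ = A.card * ((3 * m - 1) + 1) := by rw [h3]
      _ = A.card * (3 * m - 1) + A.card := by ring
    have : L + A.card ≤ A.card * (3 * m - 1) + A.card := by omega
    have hLmul : ℓ * (3 * m - 1) ≤ A.card * (3 * m - 1) := by
      rw [hLdef] at this; omega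
    exact Nat.le_of_mul_le_mul_right hLmul (by omega)
  have htcard : A.card = ℓ := le_antisymm htℓ hℓt
  have hcge : 3 * ℓ ≤ C.card := by
    have : m * (3 * ℓ) ≤ m * C.card := by
      rw [e1]
      rw [htcard] at key
      exact key
    exact Nat.le_of_mul_le_mul_left this (by omega)
  have hccard : C.card = 3 * ℓ := le_antisymm hcle hcge
  refine ⟨A, htcard, ?_⟩
  apply Finset.eq_univ_of_card
  rw [← hCdef] at *
  rw [hccard, Fintype.card_fin]

/-- If some deletion set makes candidate `1` uniquely win, then there is an exact cover:
a set `A ⊆ [m]` with `|A| = ℓ` and `⋃_{i ∈ A} S_i = {1, …, 3ℓ}`. -/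
theorem wins_implies_exact_cover (ℓ m : ℕ) (hℓ : 1 ≤ ℓ) (hm : 1 ≤ m)
    (S : Fin m → Finset (Fin (3 * ℓ)))
    (hS3 : ∀ i, (S i).card = 3)
    (hcov : Finset.univ.biUnion S = Finset.univ)
    (hex : ∃ W : Set (V2 ℓ m), x2 ℓ m (Nat.mul_pos hℓ (by omega)) ∉ W ∧
      wins2 ℓ m S (x2 ℓ m (Nat.mul_pos hℓ (by omega))) W) :
    ∃ A : Finset (Fin m), A.card = ℓ ∧ A.biUnion S = Finset.univ := by
  obtain ⟨W, hxW, hwins⟩ := hex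
  exact core ℓ m hℓ hm S hS3 W (Nat.mul_pos hℓ (by omega)) hxW hwins
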